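/- arXiv:2309.12041 — 6 statements merged into one kernel-verified Lean document; each statement's English description precedes it below -/
import Mathlib

section
/- Let D ≥ 1 be a natural number, σ > 0, α > 1 a real number, and let r_1, …, r_D > 0 be weights with Σ_{d=1}^D r_d = 1. For each d set σ_d² := σ²/(D·r_d). Let s_1, …, s_D ≥ 0 and let a, b ∈ ℝ^D satisfy |a_d − b_d| ≤ s_d for all d. Then the Rényi divergence of order α between the product Gaussian densities ∏_{d=1}^D φ_{a_d,σ_d²}(x_d) and ∏_{d=1}^D φ_{b_d,σ_d²}(x_d), namely (α−1)⁻¹·ln ∫_{ℝ^D} (∏_{d=1}^D φ_{a_d,σ_d²}(x_d))^α · (∏_{d=1}^D φ_{b_d,σ_d²}(x_d))^{1−α} dx, is at most α·D·(Σ_{d=1}^D r_d·s_d²)/(2σ²). -/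
open MeasureTheory Real

/-!
The geometric mixture `φ_{a,v}^α φ_{b,v}^{1-α}` of two Gaussians with a common variance is, by
completing the square, `exp (α (α - 1) (a - b)² / (2v))` times the Gaussian density centred at
`α a + (1 - α) b`, so its integral is that exponential factor. For product densities the integral
factorises over the coordinates, hence the Rényi divergence is exactly
`α ∑_d (a_d - b_d)² / (2 v_d)`, which is then bounded termwise.
-/

/-- Gaussian density with mean `μ` and variance `v`. -/
noncomputable def gaussPDF (μ v x : ℝ) : ℝ :=
  (Real.sqrt (2 * Real.pi * v))⁻¹ * Real.exp (-(x - μ) ^ 2 / (2 * v))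

lemma gaussPDF_nonneg (μ v x : ℝ) : 0 ≤ gaussPDF μ v x := by
  unfold gaussPDF; positivity

lemma gaussPDF_eq_gaussianPDFReal (μ : ℝ) {v : ℝ} (hv : 0 < v) :
    gaussPDF μ v = ProbabilityTheory.gaussianPDFReal μ ⟨v, hv.le⟩ := by
  funext x
  simp only [gaussPDF, ProbabilityTheory.gaussianPDFReal, neg_div]
  rfl

lemma integral_gaussPDF (μ : ℝ) {v : ℝ} (hv : 0 < v) : ∫ x, gaussPDF μ v x = 1 := by
  rw [gaussPDF_eq_gaussianPDFReal μ hv]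
  exact ProbabilityTheory.integral_gaussianPDFReal_eq_one μ (NNReal.coe_ne_zero.mp hv.ne')

lemma mul_exp_rpow_mul_mul_exp_rpow {c : ℝ} (hc : 0 < c) (p q α : ℝ) :
    (c * exp p) ^ α * (c * exp q) ^ (1 - α) = c * exp (α * p + (1 - α) * q) := by
  rw [mul_rpow hc.le (exp_nonneg _), mul_rpow hc.le (exp_nonneg _), ← exp_mul, ← exp_mul,
    exp_add, mul_comm p, mul_comm q]
  calc c ^ α * exp (α * p) * (c ^ (1 - α) * exp ((1 - α) * q))
      = c ^ (α + (1 - α)) * (exp (α * p) * exp ((1 - α) * q)) := by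
        rw [rpow_add hc]; ring
    _ = c * (exp (α * p) * exp ((1 - α) * q)) := by norm_num

lemma gaussPDF_rpow_mul_gaussPDF_rpow (a b α : ℝ) {v : ℝ} (hv : 0 < v) (x : ℝ) :
    gaussPDF a v x ^ α * gaussPDF b v x ^ (1 - α) =
      exp (α * (α - 1) * (a - b) ^ 2 / (2 * v)) * gaussPDF (α * a + (1 - α) * b) v x := by
  have hc : 0 < (sqrt (2 * π * v))⁻¹ := by positivity
  rw [gaussPDF, gaussPDF, gaussPDF, mul_exp_rpow_mul_mul_exp_rpow hc, mul_left_comm, ← exp_add]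
  congr 2
  field_simp
  ring

lemma integral_gaussPDF_rpow_mul_gaussPDF_rpow (a b α : ℝ) {v : ℝ} (hv : 0 < v) :
    ∫ x, gaussPDF a v x ^ α * gaussPDF b v x ^ (1 - α) =
      exp (α * (α - 1) * (a - b) ^ 2 / (2 * v)) := by
  simp_rw [gaussPDF_rpow_mul_gaussPDF_rpow a b α hv]
  rw [integral_const_mul, integral_gaussPDF _ hv, mul_one]

lemma integral_prod_gaussPDF_rpow_mul_prod_gaussPDF_rpow {ι : Type*} [Fintype ι]
    (a b v : ι → ℝ) (α : ℝ) (hv : ∀ i, 0 < v i) :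
    ∫ x : ι → ℝ, (∏ i, gaussPDF (a i) (v i) (x i)) ^ α *
        (∏ i, gaussPDF (b i) (v i) (x i)) ^ (1 - α) =
      exp (∑ i, α * (α - 1) * (a i - b i) ^ 2 / (2 * v i)) := by
  have hprod (x : ι → ℝ) :
      (∏ i, gaussPDF (a i) (v i) (x i)) ^ α * (∏ i, gaussPDF (b i) (v i) (x i)) ^ (1 - α) =
        ∏ i, gaussPDF (a i) (v i) (x i) ^ α * gaussPDF (b i) (v i) (x i) ^ (1 - α) := by
    rw [Finset.prod_mul_distrib, finsetProd_rpow _ _ (fun i _ ↦ gaussPDF_nonneg _ _ _),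
      finsetProd_rpow _ _ (fun i _ ↦ gaussPDF_nonneg _ _ _)]
  simp_rw [hprod]
  rw [integral_fintype_prod_volume_eq_prod
    (fun i x ↦ gaussPDF (a i) (v i) x ^ α * gaussPDF (b i) (v i) x ^ (1 - α)), exp_sum]
  exact Finset.prod_congr rfl fun i _ ↦ integral_gaussPDF_rpow_mul_gaussPDF_rpow _ _ α (hv i)

lemma renyiDiv_prod_gaussPDF {ι : Type*} [Fintype ι] (a b v : ι → ℝ) {α : ℝ} (hα : α ≠ 1)
    (hv : ∀ i, 0 < v i) :
    (α - 1)⁻¹ * log (∫ x : ι → ℝ, (∏ i, gaussPDF (a i) (v i) (x i)) ^ α *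
        (∏ i, gaussPDF (b i) (v i) (x i)) ^ (1 - α)) =
      α * ∑ i, (a i - b i) ^ 2 / (2 * v i) := by
  have hα' : α - 1 ≠ 0 := sub_ne_zero.mpr hα
  rw [integral_prod_gaussPDF_rpow_mul_prod_gaussPDF_rpow a b v α hv, log_exp, Finset.mul_sum,
    Finset.mul_sum]
  refine Finset.sum_congr rfl fun i _ ↦ ?_
  field_simp

theorem renyi_nonspherical_gauss_le_general (D : ℕ) (hD : 1 ≤ D) (σ α : ℝ) (hσ : 0 < σ) (hα : 1 < α)
    (r s : Fin D → ℝ) (a b : Fin D → ℝ)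
    (hr : ∀ d, 0 < r d)
    (hab : ∀ d, |a d - b d| ≤ s d) :
    (α - 1)⁻¹ * Real.log (∫ x : Fin D → ℝ,
        (∏ d, gaussPDF (a d) (σ ^ 2 / (D * r d)) (x d)) ^ α *
        (∏ d, gaussPDF (b d) (σ ^ 2 / (D * r d)) (x d)) ^ (1 - α)) ≤
      α * D * (∑ d, r d * s d ^ 2) / (2 * σ ^ 2) := by
  have hDpos : (0 : ℝ) < D := by exact_mod_cast hD
  have hv (d : Fin D) : 0 < σ ^ 2 / (D * r d) := by have := hr d; positivity
  rw [renyiDiv_prod_gaussPDF a b _ hα.ne' hv]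
  have hterm (d : Fin D) :
      (a d - b d) ^ 2 / (2 * (σ ^ 2 / (D * r d))) ≤ D * (r d * s d ^ 2) / (2 * σ ^ 2) := by
    have hsq : (a d - b d) ^ 2 ≤ s d ^ 2 := by
      simpa only [sq_abs] using pow_le_pow_left₀ (abs_nonneg _) (hab d) 2
    have := hr d
    calc (a d - b d) ^ 2 / (2 * (σ ^ 2 / (D * r d)))
        = D * (r d * (a d - b d) ^ 2) / (2 * σ ^ 2) := by field_simp
      _ ≤ D * (r d * s d ^ 2) / (2 * σ ^ 2) := by gcongr
  calc α * ∑ d, (a d - b d) ^ 2 / (2 * (σ ^ 2 / (D * r d)))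
      ≤ α * ∑ d, D * (r d * s d ^ 2) / (2 * σ ^ 2) :=
        mul_le_mul_of_nonneg_left (Finset.sum_le_sum fun d _ ↦ hterm d) (by linarith)
    _ = α * D * (∑ d, r d * s d ^ 2) / (2 * σ ^ 2) := by
        rw [← Finset.sum_div, ← Finset.mul_sum]; ring

theorem renyi_nonspherical_gauss_le (D : ℕ) (hD : 1 ≤ D) (σ α : ℝ) (hσ : 0 < σ) (hα : 1 < α)
    (r s : Fin D → ℝ) (a b : Fin D → ℝ)
    (hr : ∀ d, 0 < r d) (hrsum : ∑ d, r d = 1)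
    (hs : ∀ d, 0 ≤ s d) (hab : ∀ d, |a d - b d| ≤ s d) :
    (α - 1)⁻¹ * Real.log (∫ x : Fin D → ℝ,
        (∏ d, gaussPDF (a d) (σ ^ 2 / (D * r d)) (x d)) ^ α *
        (∏ d, gaussPDF (b d) (σ ^ 2 / (D * r d)) (x d)) ^ (1 - α)) ≤
      α * D * (∑ d, r d * s d ^ 2) / (2 * σ ^ 2) :=
  renyi_nonspherical_gauss_le_general D hD σ α hσ hα r s a b hr hab
end

section
/- Let σ > 0 and s ∈ ℝ. Define the privacy loss function L(x) := ln(φ_{0,σ²}(x)/φ_{s,σ²}(x)) = (s² − 2·s·x)/(2σ²). Then the pushforward of the Gaussian probability measure with mean 0 and variance σ² on ℝ under L equals the Gaussian probability measure with mean s²/(2σ²) and variance s²/σ². -/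
open MeasureTheory ProbabilityTheory

open scoped NNReal

lemma gaussianReal_map_const_mul_add_const (μ : ℝ) (v : ℝ≥0) (a b : ℝ) :
    (gaussianReal μ v).map (fun x ↦ a * x + b) =
      gaussianReal (a * μ + b) (.mk (a ^ 2) (sq_nonneg _) * v) := by
  have : (fun x ↦ a * x + b) = (· + b) ∘ (a * ·) := rfl
  rw [this, ← Measure.map_map (by fun_prop) (by fun_prop), gaussianReal_map_const_mul,
    gaussianReal_map_add_const]

theorem privacy_loss_distribution_gaussian_general (σ s : ℝ) :
    Measure.map (fun x : ℝ => (s ^ 2 - 2 * s * x) / (2 * σ ^ 2))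
        (gaussianReal 0 (Real.toNNReal (σ ^ 2))) =
      gaussianReal (s ^ 2 / (2 * σ ^ 2)) (Real.toNNReal (s ^ 2 / σ ^ 2)) := by
  have loss_affine : (fun x : ℝ => (s ^ 2 - 2 * s * x) / (2 * σ ^ 2)) =
      fun x ↦ -(s / σ ^ 2) * x + s ^ 2 / (2 * σ ^ 2) := by
    funext x; ring
  rw [loss_affine, gaussianReal_map_const_mul_add_const]
  congr 1
  · ring
  · ext
    rw [NNReal.coe_mul, NNReal.coe_mk, Real.coe_toNNReal _ (sq_nonneg σ),
      Real.coe_toNNReal _ (by positivity)]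
    -- `div_self_mul_self'` holds also at `σ = 0`, where `0⁻¹ = 0` makes both sides vanish.
    calc (-(s / σ ^ 2)) ^ 2 * σ ^ 2 = s ^ 2 * (σ ^ 2 / (σ ^ 2 * σ ^ 2)) := by ring
      _ = s ^ 2 / σ ^ 2 := by rw [div_self_mul_self']; ring

theorem privacy_loss_distribution_gaussian (σ s : ℝ) (hσ : 0 < σ) :
    Measure.map (fun x : ℝ => (s ^ 2 - 2 * s * x) / (2 * σ ^ 2))
        (gaussianReal 0 (Real.toNNReal (σ ^ 2))) =
      gaussianReal (s ^ 2 / (2 * σ ^ 2)) (Real.toNNReal (s ^ 2 / σ ^ 2)) :=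
  privacy_loss_distribution_gaussian_general σ s
end

section
/- Let k ≥ 1 be a natural number, σ_1, …, σ_k > 0 and s_1, …, s_k ∈ ℝ. Then the pushforward of the product measure ⨂_{d=1}^k N(0, σ_d²) on ℝ^k under the map x ↦ Σ_{d=1}^k (s_d² − 2·s_d·x_d)/(2σ_d²) equals the Gaussian probability measure N(Σ_{d=1}^k s_d²/(2σ_d²), Σ_{d=1}^k s_d²/σ_d²) on ℝ. -/
/-!
Each summand is an affine function of a single coordinate, hence Gaussian, and the coordinates are
independent under the product measure. Characteristic functions of independent variables multiply,
and a product of Gaussian characteristic functions is again one, with summed means and variances.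
-/

open MeasureTheory ProbabilityTheory
open scoped NNReal

namespace ProbabilityTheory

lemma gaussianReal_map_mul_add {μ : ℝ} {v : ℝ≥0} (a b : ℝ) :
    (gaussianReal μ v).map (fun x ↦ a * x + b) =
      gaussianReal (a * μ + b) ((a ^ 2).toNNReal * v) := by
  rw [← Function.comp_def (· + b) (a * ·),
    ← Measure.map_map (measurable_add_const b) (measurable_const_mul a),
    gaussianReal_map_const_mul, gaussianReal_map_add_const,
    Real.toNNReal_of_nonneg (sq_nonneg a)]

lemma iIndepFun.map_sum_eq_gaussianReal {Ω ι : Type*} [MeasurableSpace Ω] [Fintype ι]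
    {P : Measure Ω} [IsFiniteMeasure P] {X : ι → Ω → ℝ} (hX : iIndepFun X P)
    (mX : ∀ i, AEMeasurable (X i) P) {m : ι → ℝ} {v : ι → ℝ≥0}
    (hXi : ∀ i, P.map (X i) = gaussianReal (m i) (v i)) :
    P.map (∑ i, X i) = gaussianReal (∑ i, m i) (∑ i, v i) := by
  refine Measure.ext_of_charFun ?_
  ext t
  simp only [hX.charFun_map_sum_eq_prod mX, Finset.prod_apply, hXi, charFun_gaussianReal,
    ← Complex.exp_sum]
  push_cast
  simp only [Finset.sum_sub_distrib, Finset.mul_sum, Finset.sum_mul, Finset.sum_div]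

end ProbabilityTheory

theorem privacy_loss_distribution_composition_general (k : ℕ)
    (σ s : Fin k → ℝ) (hσ : ∀ d, 0 < σ d) :
    Measure.map (fun x : Fin k → ℝ => ∑ d, (s d ^ 2 - 2 * s d * x d) / (2 * σ d ^ 2))
        (Measure.pi fun d => gaussianReal 0 (Real.toNNReal (σ d ^ 2))) =
      gaussianReal (∑ d, s d ^ 2 / (2 * σ d ^ 2))
        (Real.toNNReal (∑ d, s d ^ 2 / σ d ^ 2)) := by
  set P := Measure.pi fun d => gaussianReal 0 (Real.toNNReal (σ d ^ 2))
  set f : Fin k → ℝ → ℝ := fun d t ↦ -(s d / σ d ^ 2) * t + s d ^ 2 / (2 * σ d ^ 2)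
  have hf : ∀ d, Measurable (f d) := fun d ↦ (measurable_const_mul _).add_const _
  have hsum : (fun x : Fin k → ℝ => ∑ d, (s d ^ 2 - 2 * s d * x d) / (2 * σ d ^ 2)) =
      ∑ d, fun x ↦ f d (x d) := by
    ext x
    simp only [Finset.sum_apply, f]
    refine Finset.sum_congr rfl fun d _ ↦ ?_
    have := (hσ d).ne'
    field_simp
    ring
  have hlaw (d : Fin k) : P.map (fun x ↦ f d (x d)) = gaussianReal (s d ^ 2 / (2 * σ d ^ 2))
      (((s d / σ d ^ 2) ^ 2).toNNReal * (σ d ^ 2).toNNReal) := by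
    change P.map (f d ∘ fun x ↦ x d) = _
    rw [← Measure.map_map (hf d) (measurable_pi_apply d), (measurePreserving_eval _ d).map_eq,
      gaussianReal_map_mul_add, mul_zero, zero_add, neg_sq]
  rw [hsum, (iIndepFun_pi (fun d ↦ (hf d).aemeasurable)).map_sum_eq_gaussianReal
    (fun d ↦ ((hf d).comp (measurable_pi_apply d)).aemeasurable) hlaw,
    Real.toNNReal_sum_of_nonneg fun d _ ↦ by positivity]
  congr 1
  refine Finset.sum_congr rfl fun d _ ↦ ?_
  rw [← Real.toNNReal_mul (by positivity)]
  have := (hσ d).ne'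
  congr 1
  field_simp

theorem privacy_loss_distribution_composition (k : ℕ) (hk : 1 ≤ k)
    (σ s : Fin k → ℝ) (hσ : ∀ d, 0 < σ d) :
    Measure.map (fun x : Fin k → ℝ => ∑ d, (s d ^ 2 - 2 * s d * x d) / (2 * σ d ^ 2))
        (Measure.pi fun d => gaussianReal 0 (Real.toNNReal (σ d ^ 2))) =
      gaussianReal (∑ d, s d ^ 2 / (2 * σ d ^ 2))
        (Real.toNNReal (∑ d, s d ^ 2 / σ d ^ 2)) :=
  privacy_loss_distribution_composition_general k σ s hσ
end

section
/- Let λ > 0, Δ ≥ 0, and let α > 1 be a real number. Then ∫_ℝ (1/(2λ))·exp((−α·|x| + (α−1)·|x−Δ|)/λ) dx = (α/(2α−1))·exp((α−1)·Δ/λ) + ((α−1)/(2α−1))·exp(−α·Δ/λ). -/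
open MeasureTheory Real Set

/-!
On each of `(-∞, 0]`, `[0, Δ]` and `[Δ, ∞)` the exponent `(-α|x| + (α-1)|x-Δ|)/λ` is affine in `x`,
with slopes `1/λ`, `(1-2α)/λ` and `-1/λ`, so the integral is the sum of two exponential tails and
one exponential integral over `[0, Δ]`, each in closed form.
-/

section ExpAffine

variable {k : ℝ} (a b d : ℝ)

theorem integrableOn_exp_mul_add_Iic (hk : 0 < k) :
    IntegrableOn (fun x => exp (k * x + d)) (Iic a) := by
  simp only [exp_add]
  exact (integrableOn_exp_mul_Iic hk a).mul_const _

theorem integrableOn_exp_mul_add_Ioi (hk : k < 0) :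
    IntegrableOn (fun x => exp (k * x + d)) (Ioi a) := by
  simp only [exp_add]
  exact (integrableOn_exp_mul_Ioi hk a).mul_const _

theorem integral_exp_mul_add_Iic (hk : 0 < k) :
    ∫ x in Iic a, exp (k * x + d) = exp (k * a + d) / k := by
  simp only [exp_add, integral_mul_const, integral_exp_mul_Iic hk]
  ring

theorem integral_exp_mul_add_Ioi (hk : k < 0) :
    ∫ x in Ioi a, exp (k * x + d) = -exp (k * a + d) / k := by
  simp only [exp_add, integral_mul_const, integral_exp_mul_Ioi hk]
  ring

theorem intervalIntegral_exp_mul_add (hk : k ≠ 0) :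
    ∫ x in a..b, exp (k * x + d) = (exp (k * b + d) - exp (k * a + d)) / k := by
  rw [intervalIntegral.integral_comp_mul_add (f := exp) hk, integral_exp, smul_eq_mul,
    inv_mul_eq_div]

end ExpAffine

theorem integral_eq_integral_Iic_add_intervalIntegral_add_integral_Ioi
    {E : Type*} [NormedAddCommGroup E] [NormedSpace ℝ E] {μ : Measure ℝ} {f : ℝ → E} {a b : ℝ}
    (hab : a ≤ b) (hleft : IntegrableOn f (Iic a) μ) (hmid : IntegrableOn f (Icc a b) μ)
    (hright : IntegrableOn f (Ioi b) μ) :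
    ∫ x, f x ∂μ = ∫ x in Iic a, f x ∂μ + ∫ x in a..b, f x ∂μ + ∫ x in Ioi b, f x ∂μ := by
  have hIic : IntegrableOn f (Iic b) μ := by
    rw [← Iic_union_Icc_eq_Iic hab]
    exact hleft.union hmid
  rw [← intervalIntegral.integral_Iic_sub_Iic hleft hIic, add_sub_cancel,
    intervalIntegral.integral_Iic_add_Ioi hIic hright]

theorem integral_exp_of_piecewise_affine {g : ℝ → ℝ} {a b k₁ k₂ k₃ d₁ d₂ d₃ : ℝ} (hab : a ≤ b)
    (hk₁ : 0 < k₁) (hk₂ : k₂ ≠ 0) (hk₃ : k₃ < 0)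
    (hleft : ∀ x ≤ a, g x = k₁ * x + d₁) (hmid : ∀ x ∈ Icc a b, g x = k₂ * x + d₂)
    (hright : ∀ x, b ≤ x → g x = k₃ * x + d₃) :
    ∫ x, exp (g x) = exp (k₁ * a + d₁) / k₁ + (exp (k₂ * b + d₂) - exp (k₂ * a + d₂)) / k₂
      - exp (k₃ * b + d₃) / k₃ := by
  have eqOn_left : EqOn (fun x => exp (g x)) (fun x => exp (k₁ * x + d₁)) (Iic a) :=
    fun x hx => congrArg exp (hleft x hx)
  have eqOn_mid : EqOn (fun x => exp (g x)) (fun x => exp (k₂ * x + d₂)) (Icc a b) :=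
    fun x hx => congrArg exp (hmid x hx)
  have eqOn_right : EqOn (fun x => exp (g x)) (fun x => exp (k₃ * x + d₃)) (Ioi b) :=
    fun x hx => congrArg exp (hright x (le_of_lt hx))
  rw [integral_eq_integral_Iic_add_intervalIntegral_add_integral_Ioi hab
      ((integrableOn_exp_mul_add_Iic a d₁ hk₁).congr_fun eqOn_left.symm measurableSet_Iic)
      (((by fun_prop : Continuous fun x => exp (k₂ * x + d₂)).integrableOn_Icc).congr_fun
        eqOn_mid.symm measurableSet_Icc)
      ((integrableOn_exp_mul_add_Ioi b d₃ hk₃).congr_fun eqOn_right.symm measurableSet_Ioi),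
    setIntegral_congr_fun measurableSet_Iic eqOn_left,
    intervalIntegral.integral_congr (uIcc_of_le hab ▸ eqOn_mid),
    setIntegral_congr_fun measurableSet_Ioi eqOn_right,
    integral_exp_mul_add_Iic _ _ hk₁, intervalIntegral_exp_mul_add _ _ _ hk₂,
    integral_exp_mul_add_Ioi _ _ hk₃]
  ring

theorem laplace_renyi_integral (lam Δ α : ℝ) (hlam : 0 < lam) (hΔ : 0 ≤ Δ) (hα : 1 < α) :
    (∫ x : ℝ, (1 / (2 * lam)) * Real.exp ((-α * |x| + (α - 1) * |x - Δ|) / lam)) =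
      (α / (2 * α - 1)) * Real.exp ((α - 1) * Δ / lam) +
        ((α - 1) / (2 * α - 1)) * Real.exp (-α * Δ / lam) := by
  have hk₂ : (1 - 2 * α) / lam ≠ 0 := div_ne_zero (by linarith) hlam.ne'
  rw [integral_const_mul, integral_exp_of_piecewise_affine hΔ (one_div_pos.2 hlam) hk₂
    (div_neg_of_neg_of_pos neg_one_lt_zero hlam) (d₁ := (α - 1) * Δ / lam)
    (d₂ := (α - 1) * Δ / lam) (d₃ := -((α - 1) * Δ / lam))]
  · have hmid_at_Δ : (1 - 2 * α) / lam * Δ + (α - 1) * Δ / lam = -α * Δ / lam := by ring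
    have hright_at_Δ : -1 / lam * Δ + -((α - 1) * Δ / lam) = -α * Δ / lam := by ring
    have h2α : 2 * α - 1 ≠ 0 := by linarith
    rw [hmid_at_Δ, hright_at_Δ, show 1 - 2 * α = -(2 * α - 1) by ring]
    simp only [mul_zero, zero_add]
    field_simp
    ring
  · intro x hx
    rw [abs_of_nonpos hx, abs_of_nonpos (by linarith)]
    ring
  · rintro x ⟨hx₀, hxΔ⟩
    rw [abs_of_nonneg hx₀, abs_of_nonpos (by linarith)]
    ring
  · intro x hx
    rw [abs_of_nonneg (by linarith), abs_of_nonneg (by linarith)]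
    ring
end

section
/- Let n ≥ 1 be a natural number, m > 0, and let y_1, …, y_{n+1} ∈ ℝ. Writing clamp(y) := max(−m, min(y, m)), one has |(1/n)·Σ_{i=1}^{n} clamp(y_i) − (1/(n+1))·Σ_{i=1}^{n+1} clamp(y_i)| ≤ 2m/(n+1). -/
open Finset

theorem clipped_mean_sensitivity (n : ℕ) (hn : 1 ≤ n) (m : ℝ) (hm : 0 < m) (y : ℕ → ℝ) :
    |(1 / (n : ℝ)) * ∑ i ∈ Finset.range n, max (-m) (min (y i) m) -
        (1 / ((n : ℝ) + 1)) * ∑ i ∈ Finset.range (n + 1), max (-m) (min (y i) m)| ≤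
      2 * m / ((n : ℝ) + 1) := by
  have hn' : (0:ℝ) < n := by exact_mod_cast hn
  have hclamp : ∀ i, |max (-m) (min (y i) m)| ≤ m := by
    intro i
    rw [abs_le]
    exact ⟨le_max_left _ _, max_le (by linarith) (min_le_right _ _)⟩
  rw [Finset.sum_range_succ]
  set A := ∑ i ∈ Finset.range n, max (-m) (min (y i) m) with hA
  set c := max (-m) (min (y n) m) with hc
  have hS : |A| ≤ n * m := by
    calc |A| ≤ ∑ i ∈ Finset.range n, |max (-m) (min (y i) m)| :=
          Finset.abs_sum_le_sum_abs _ _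
      _ ≤ ∑ i ∈ Finset.range n, m := Finset.sum_le_sum fun i _ => hclamp i
      _ = n * m := by rw [Finset.sum_const, Finset.card_range]; ring
  have hcb := hclamp n
  have key : 1/(n:ℝ) * A - 1/((n:ℝ)+1) * (A + c)
      = A / ((n:ℝ) * ((n:ℝ)+1)) - c / ((n:ℝ)+1) := by
    field_simp
    ring
  rw [key]
  have h1 : |A / ((n:ℝ) * ((n:ℝ)+1))| ≤ m / ((n:ℝ)+1) := by
    rw [abs_div, abs_of_pos (by positivity : (0:ℝ) < (n:ℝ) * ((n:ℝ)+1))]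
    rw [div_le_div_iff₀ (by positivity) (by positivity)]
    nlinarith [abs_nonneg A]
  have h2 : |c / ((n:ℝ)+1)| ≤ m / ((n:ℝ)+1) := by
    rw [abs_div, abs_of_pos (by positivity : (0:ℝ) < (n:ℝ)+1)]
    exact div_le_div_of_nonneg_right hcb (by positivity) |>.trans_eq rfl
  calc |A / ((n:ℝ) * ((n:ℝ)+1)) - c / ((n:ℝ)+1)|
      ≤ |A / ((n:ℝ) * ((n:ℝ)+1))| + |c / ((n:ℝ)+1)| := abs_sub _ _
    _ ≤ m / ((n:ℝ)+1) + m / ((n:ℝ)+1) := add_le_add h1 h2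
    _ = 2 * m / ((n:ℝ)+1) := by ring
end

section
/- Let B be a nonempty finite set, Δ > 0, ε > 0, let w : B → ℝ satisfy w(b) > 0 for all b, and let u, u' : B → ℝ satisfy |u(b) − u'(b)| ≤ Δ for all b ∈ B. Then for every j ∈ B, (w(j)·exp(ε·u(j)/(2Δ))) / (Σ_{b∈B} w(b)·exp(ε·u(b)/(2Δ))) ≤ exp(ε) · (w(j)·exp(ε·u'(j)/(2Δ))) / (Σ_{b∈B} w(b)·exp(ε·u'(b)/(2Δ))). -/
open Finset Real

theorem exp_mech_dp {B : Type*} [Fintype B] [Nonempty B]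
    (Δ ε : ℝ) (hΔ : 0 < Δ) (hε : 0 < ε)
    (w u u' : B → ℝ) (hw : ∀ b, 0 < w b) (hu : ∀ b, |u b - u' b| ≤ Δ) (j : B) :
    (w j * Real.exp (ε * u j / (2 * Δ))) / (∑ b, w b * Real.exp (ε * u b / (2 * Δ))) ≤
      Real.exp ε *
        ((w j * Real.exp (ε * u' j / (2 * Δ))) / (∑ b, w b * Real.exp (ε * u' b / (2 * Δ)))) := by
  have key : ∀ v v' : B → ℝ, (∀ b, |v b - v' b| ≤ Δ) → ∀ b,
      Real.exp (ε * v b / (2 * Δ)) ≤ Real.exp (ε / 2) * Real.exp (ε * v' b / (2 * Δ)) := by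
    intro v v' hv b
    rw [← Real.exp_add]
    apply Real.exp_le_exp.2
    have h1 : v b - v' b ≤ Δ := (abs_le.1 (hv b)).2
    have h2Δ : (0:ℝ) < 2 * Δ := by linarith
    rw [div_le_iff₀ h2Δ, add_mul, div_mul_cancel₀ _ h2Δ.ne']
    nlinarith [hε.le]
  have hS : 0 < ∑ b, w b * Real.exp (ε * u b / (2 * Δ)) :=
    Finset.sum_pos (fun b _ => mul_pos (hw b) (Real.exp_pos _)) Finset.univ_nonempty
  have hS' : 0 < ∑ b, w b * Real.exp (ε * u' b / (2 * Δ)) :=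
    Finset.sum_pos (fun b _ => mul_pos (hw b) (Real.exp_pos _)) Finset.univ_nonempty
  rw [div_le_iff₀ hS, mul_comm (Real.exp ε), mul_assoc, div_mul_eq_mul_div,
    le_div_iff₀ hS']
  have h1 : w j * Real.exp (ε * u j / (2 * Δ)) ≤
      Real.exp (ε / 2) * (w j * Real.exp (ε * u' j / (2 * Δ))) := by
    have := key u u' hu j
    have hwj := (hw j).le
    nlinarith [Real.exp_pos (ε * u j / (2 * Δ))]
  have h2 : (∑ b, w b * Real.exp (ε * u' b / (2 * Δ))) ≤
      Real.exp (ε / 2) * ∑ b, w b * Real.exp (ε * u b / (2 * Δ)) := by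
    rw [Finset.mul_sum]
    apply Finset.sum_le_sum
    intro b _
    have := key u' u (fun b => by rw [abs_sub_comm]; exact hu b) b
    have hwb := (hw b).le
    nlinarith [Real.exp_pos (ε * u' b / (2 * Δ))]
  calc w j * Real.exp (ε * u j / (2 * Δ)) * ∑ b, w b * Real.exp (ε * u' b / (2 * Δ))
      ≤ (Real.exp (ε / 2) * (w j * Real.exp (ε * u' j / (2 * Δ)))) *
        (Real.exp (ε / 2) * ∑ b, w b * Real.exp (ε * u b / (2 * Δ))) := by
        exact mul_le_mul h1 h2 hS'.le (mul_nonneg (Real.exp_pos _).le (mul_pos (hw j) (Real.exp_pos _)).le)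
    _ = w j * Real.exp (ε * u' j / (2 * Δ)) *
        (Real.exp ε * ∑ b, w b * Real.exp (ε * u b / (2 * Δ))) := by
        rw [show Real.exp ε = Real.exp (ε/2) * Real.exp (ε/2) by
          rw [← Real.exp_add]; ring_nf]
        ring
end
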